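/- arXiv:1308.5541 — 2 statements merged into one kernel-verified Lean document; each statement's English description precedes it below -/
import Mathlib

section
/- For any real K ∈ (0,2), the equation Φ⁻¹(1 − 1/x) − √(K log x) = 0 has a unique solution x₀ > 1, and Φ⁻¹(1 − 1/x) − √(K log x) > 0 for every x > x₀. -/
open Real

/-- The standard normal distribution function. -/
noncomputable def stdNormalCDF (x : ℝ) : ℝ :=
  (Real.sqrt (2 * Real.pi))⁻¹ * ∫ t in Set.Iic x, Real.exp (-t ^ 2 / 2)

/-!
Write `Q = 1 - Φ` for the Gaussian tail and `φ` for the density. Since `Φ (g x) = 1 - 1/x`,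
the sign of `g x - √(K log x)` is that of `ψ x - 1`, where `ψ x = x * Q (√(K log x))`
(`scaledTail K x` below).

The bound `Q t ≤ exp (-t²/2) / 2` for `t ≥ 0` (from `u² ≥ t² + (u - t)²` when `u ≥ t ≥ 0`) gives
`ψ x ≤ x ^ (1 - K/2) / 2 ≤ exp (1/2) / 2 < 1` for `1 < x ≤ a := exp (1 / (2 - K))`.
For `x ≥ a` we have `ψ' x = Q t - K / (2t) * φ t` with `t = √(K log x)` and `t² ≥ K / (2 - K)`,
so the Mills-ratio bound `Q t > t / (t² + 1) * φ t` makes `ψ' > 0`; the same bound makes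
`ψ x → ∞`. Hence `ψ` crosses `1` exactly once, from below. The Mills-ratio bound holds because
`-t / (t² + 1) * φ t` is a primitive of `φ - 2 / (t² + 1)² * φ`, which is strictly below `φ`.
-/

open MeasureTheory Set Filter Topology

theorem exists_unique_crossing_of_strictMonoOn {f : ℝ → ℝ} {l a y : ℝ} (hla : l < a)
    (hlt : ∀ x ∈ Ioc l a, f x < y) (hcont : ContinuousOn f (Ici a))
    (hmono : StrictMonoOn f (Ici a)) (htop : Tendsto f atTop atTop) :
    ∃ x₀, l < x₀ ∧ f x₀ = y ∧ (∀ x, l < x → f x = y → x = x₀) ∧ ∀ x, x₀ < x → y < f x := by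
  obtain ⟨b, hab, hb⟩ := ((eventually_ge_atTop a).and (htop.eventually_gt_atTop y)).exists
  obtain ⟨x₀, ⟨hax₀, -⟩, hx₀⟩ := intermediate_value_Icc hab (hcont.mono Icc_subset_Ici_self)
    ⟨(hlt a ⟨hla, le_rfl⟩).le, hb.le⟩
  have hge : ∀ x, l < x → f x = y → a ≤ x := fun x hlx hx ↦
    not_lt.1 fun hxa ↦ (hlt x ⟨hlx, hxa.le⟩).ne hx
  refine ⟨x₀, hla.trans_le hax₀, hx₀, fun x hlx hx ↦ ?_, fun x hx ↦ ?_⟩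
  · exact hmono.injOn (hge x hlx hx) hax₀ (hx.trans hx₀.symm)
  · exact hx₀ ▸ hmono hax₀ (hax₀.trans hx.le) hx

noncomputable def stdNormalPDF (t : ℝ) : ℝ := (√(2 * π))⁻¹ * exp (-t ^ 2 / 2)

noncomputable def stdNormalTail (t : ℝ) : ℝ := ∫ u in Ioi t, stdNormalPDF u

lemma stdNormalPDF_eq_mul_exp_neg_mul_sq (t : ℝ) :
    stdNormalPDF t = (√(2 * π))⁻¹ * exp (-(1 / 2) * t ^ 2) := by
  rw [stdNormalPDF]; ring_nf

lemma stdNormalPDF_pos (t : ℝ) : 0 < stdNormalPDF t := by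
  unfold stdNormalPDF; positivity

lemma continuous_stdNormalPDF : Continuous stdNormalPDF := by
  unfold stdNormalPDF; fun_prop

lemma integrable_stdNormalPDF : Integrable stdNormalPDF := by
  rw [funext stdNormalPDF_eq_mul_exp_neg_mul_sq]
  exact (integrable_exp_neg_mul_sq (by norm_num)).const_mul _

lemma integral_stdNormalPDF : ∫ t, stdNormalPDF t = 1 := by
  simp_rw [stdNormalPDF_eq_mul_exp_neg_mul_sq]
  rw [integral_const_mul, integral_gaussian, show π / (1 / 2) = 2 * π by ring,
    inv_mul_cancel₀ (by positivity)]

lemma integral_Ioi_zero_stdNormalPDF : ∫ t in Ioi 0, stdNormalPDF t = 1 / 2 := by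
  simp_rw [stdNormalPDF_eq_mul_exp_neg_mul_sq]
  rw [integral_const_mul, integral_gaussian_Ioi, show π / (1 / 2) = 2 * π by ring,
    mul_div_assoc', inv_mul_cancel₀ (by positivity)]

lemma stdNormalCDF_add_stdNormalTail (t : ℝ) : stdNormalCDF t + stdNormalTail t = 1 := by
  rw [stdNormalCDF, stdNormalTail, ← integral_const_mul, ← integral_stdNormalPDF,
    ← intervalIntegral.integral_Iic_add_Ioi integrable_stdNormalPDF.integrableOn
      integrable_stdNormalPDF.integrableOn]
  rfl

theorem hasDerivAt_integral_Ioi {E : Type*} [NormedAddCommGroup E] [NormedSpace ℝ E]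
    [CompleteSpace E] {f : ℝ → E} (hint : Integrable f) (hcont : Continuous f) (t : ℝ) :
    HasDerivAt (fun s ↦ ∫ u in Ioi s, f u) (-f t) t := by
  have hsplit :
      (fun s ↦ ∫ u in Ioi s, f u) = fun s ↦ (∫ u in Ioi 0, f u) - ∫ u in 0..s, f u := by
    funext s
    rw [← intervalIntegral.integral_interval_add_Ioi hint.integrableOn hint.integrableOn,
      intervalIntegral.integral_symm]
    abel
  rw [hsplit, ← zero_sub]
  exact (hasDerivAt_const t _).sub (hcont.integral_hasStrictDerivAt 0 t).hasDerivAt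

lemma hasDerivAt_stdNormalTail (t : ℝ) : HasDerivAt stdNormalTail (-stdNormalPDF t) t :=
  hasDerivAt_integral_Ioi integrable_stdNormalPDF continuous_stdNormalPDF t

lemma stdNormalTail_strictAnti : StrictAnti stdNormalTail :=
  strictAnti_of_hasDerivAt_neg hasDerivAt_stdNormalTail fun t ↦ neg_lt_zero.2 (stdNormalPDF_pos t)

lemma stdNormalCDF_strictMono : StrictMono stdNormalCDF := by
  intro s t hst
  linarith [stdNormalCDF_add_stdNormalTail s, stdNormalCDF_add_stdNormalTail t,
    stdNormalTail_strictAnti hst]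

theorem setIntegral_Ioi_comp_sub_right {E : Type*} [NormedAddCommGroup E] [NormedSpace ℝ E]
    (f : ℝ → E) (t : ℝ) : ∫ u in Ioi t, f (u - t) = ∫ v in Ioi 0, f v := by
  have h := (measurePreserving_add_right volume t).setIntegral_preimage_emb
    (MeasurableEquiv.addRight t).measurableEmbedding (fun u ↦ f (u - t)) (Ioi t)
  simpa using h.symm

lemma stdNormalPDF_le_exp_mul_stdNormalPDF_sub {t u : ℝ} (ht : 0 ≤ t) (htu : t ≤ u) :
    stdNormalPDF u ≤ exp (-t ^ 2 / 2) * stdNormalPDF (u - t) := by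
  rw [stdNormalPDF, stdNormalPDF, mul_left_comm, ← exp_add]
  gcongr
  nlinarith

lemma stdNormalTail_le {t : ℝ} (ht : 0 ≤ t) : stdNormalTail t ≤ exp (-t ^ 2 / 2) / 2 :=
  calc stdNormalTail t ≤ ∫ u in Ioi t, exp (-t ^ 2 / 2) * stdNormalPDF (u - t) :=
        setIntegral_mono_on integrable_stdNormalPDF.integrableOn
          ((integrable_stdNormalPDF.comp_sub_right t).const_mul _).integrableOn measurableSet_Ioi
          fun _ hu ↦ stdNormalPDF_le_exp_mul_stdNormalPDF_sub ht hu.le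
    _ = exp (-t ^ 2 / 2) / 2 := by
        rw [integral_const_mul, setIntegral_Ioi_comp_sub_right, integral_Ioi_zero_stdNormalPDF]
        ring

lemma hasDerivAt_stdNormalPDF (t : ℝ) : HasDerivAt stdNormalPDF (-t * stdNormalPDF t) t := by
  have h : HasDerivAt (fun x : ℝ ↦ -x ^ 2 / 2) (-t) t :=
    ((hasDerivAt_pow 2 t).neg.div_const 2).congr_deriv (by norm_num; ring)
  exact (h.exp.const_mul _).congr_deriv (by rw [stdNormalPDF]; ring)

lemma tendsto_stdNormalPDF_atTop : Tendsto stdNormalPDF atTop (𝓝 0) := by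
  have h : Tendsto (fun t : ℝ ↦ -t ^ 2 / 2) atTop atBot :=
    (tendsto_neg_atTop_atBot.comp (tendsto_pow_atTop two_ne_zero)).atBot_div_const two_pos
  rw [← mul_zero (√(2 * π))⁻¹]
  exact (tendsto_exp_atBot.comp h).const_mul _

lemma hasDerivAt_neg_div_mul_stdNormalPDF (u : ℝ) :
    HasDerivAt (fun v ↦ -(v / (v ^ 2 + 1) * stdNormalPDF v))
      (stdNormalPDF u - 2 / (u ^ 2 + 1) ^ 2 * stdNormalPDF u) u := by
  have hu : u ^ 2 + 1 ≠ 0 := by positivity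
  refine ((((hasDerivAt_id u).div ((hasDerivAt_pow 2 u).add_const 1) hu).mul
    (hasDerivAt_stdNormalPDF u)).neg).congr_deriv ?_
  simp only [id, Pi.div_apply]
  field_simp
  ring

lemma tendsto_div_mul_stdNormalPDF_atTop :
    Tendsto (fun v ↦ v / (v ^ 2 + 1) * stdNormalPDF v) atTop (𝓝 0) := by
  refine squeeze_zero' ?_ ?_ tendsto_stdNormalPDF_atTop
  · filter_upwards [eventually_ge_atTop 0] with v hv
    have := stdNormalPDF_pos v
    positivity
  · filter_upwards [eventually_ge_atTop 0] with v hv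
    have hv1 : v / (v ^ 2 + 1) ≤ 1 := by
      rw [div_le_one (by positivity)]; nlinarith
    simpa using mul_le_mul_of_nonneg_right hv1 (stdNormalPDF_pos v).le

lemma integrable_div_mul_stdNormalPDF :
    Integrable fun u ↦ 2 / (u ^ 2 + 1) ^ 2 * stdNormalPDF u := by
  refine integrable_stdNormalPDF.bdd_mul (c := 2)
    (by fun_prop : Measurable fun u : ℝ ↦ 2 / (u ^ 2 + 1) ^ 2).aestronglyMeasurable
    (ae_of_all _ fun u ↦ ?_)
  rw [Real.norm_of_nonneg (by positivity), div_le_iff₀ (by positivity)]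
  nlinarith [sq_nonneg u, sq_nonneg (u ^ 2)]

lemma stdNormalTail_sub_div_mul_stdNormalPDF (t : ℝ) :
    stdNormalTail t - t / (t ^ 2 + 1) * stdNormalPDF t =
      ∫ u in Ioi t, 2 / (u ^ 2 + 1) ^ 2 * stdNormalPDF u := by
  have h := integral_Ioi_of_hasDerivAt_of_tendsto
    (hasDerivAt_neg_div_mul_stdNormalPDF t).continuousAt.continuousWithinAt
    (fun u _ ↦ hasDerivAt_neg_div_mul_stdNormalPDF u)
    (integrable_stdNormalPDF.sub integrable_div_mul_stdNormalPDF).integrableOn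
    (by simpa using tendsto_div_mul_stdNormalPDF_atTop.neg)
  rw [integral_sub integrable_stdNormalPDF.integrableOn
    integrable_div_mul_stdNormalPDF.integrableOn] at h
  rw [stdNormalTail]
  linarith

theorem div_mul_stdNormalPDF_lt_stdNormalTail (t : ℝ) :
    t / (t ^ 2 + 1) * stdNormalPDF t < stdNormalTail t := by
  have hpos : ∀ u : ℝ, 0 < 2 / (u ^ 2 + 1) ^ 2 * stdNormalPDF u := fun u ↦ by
    have := stdNormalPDF_pos u
    positivity
  have : 0 < ∫ u in Ioi t, 2 / (u ^ 2 + 1) ^ 2 * stdNormalPDF u := by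
    rw [setIntegral_pos_iff_support_of_nonneg_ae (ae_of_all _ fun u ↦ (hpos u).le)
      integrable_div_mul_stdNormalPDF.integrableOn, Function.support_eq_univ fun u ↦ (hpos u).ne']
    simp
  linarith [stdNormalTail_sub_div_mul_stdNormalPDF t]

lemma lt_iff_one_lt_mul_stdNormalTail {x y s : ℝ} (hx : 0 < x)
    (hy : stdNormalCDF y = 1 - 1 / x) : s < y ↔ 1 < x * stdNormalTail s := by
  rw [← stdNormalCDF_strictMono.lt_iff_lt, hy, ← div_lt_iff₀' hx]
  constructor <;> intro <;> linarith [stdNormalCDF_add_stdNormalTail s]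

lemma eq_iff_mul_stdNormalTail_eq_one {x y s : ℝ} (hx : 0 < x)
    (hy : stdNormalCDF y = 1 - 1 / x) : y = s ↔ x * stdNormalTail s = 1 := by
  rw [← stdNormalCDF_strictMono.injective.eq_iff, hy, mul_comm, ← eq_div_iff hx.ne']
  constructor <;> intro <;> linarith [stdNormalCDF_add_stdNormalTail s]

noncomputable def scaledTail (K x : ℝ) : ℝ := x * stdNormalTail √(K * log x)

lemma mul_exp_neg_sqrt_mul_log_sq {K x : ℝ} (hx : 0 < x) (hKx : 0 ≤ K * log x) :
    x * exp (-√(K * log x) ^ 2 / 2) = exp ((1 - K / 2) * log x) := by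
  rw [sq_sqrt hKx, ← exp_log hx, ← exp_add, log_exp]
  ring_nf

lemma hasDerivAt_scaledTail {K x : ℝ} (hK : K ≠ 0) (hx : 1 < x) :
    HasDerivAt (scaledTail K) (stdNormalTail √(K * log x) -
      K / (2 * √(K * log x)) * stdNormalPDF √(K * log x)) x := by
  have hx₀ : x ≠ 0 := by positivity
  have hs := ((hasDerivAt_log hx₀).const_mul K).sqrt (mul_ne_zero hK (log_pos hx).ne')
  refine ((hasDerivAt_id x).mul ((hasDerivAt_stdNormalTail _).comp x hs)).congr_deriv ?_
  simp only [id, Function.comp_apply]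
  field_simp
  ring

lemma continuousOn_scaledTail {K : ℝ} (hK : K ≠ 0) : ContinuousOn (scaledTail K) (Ioi 1) :=
  fun _ hx ↦ (hasDerivAt_scaledTail hK hx).continuousAt.continuousWithinAt

lemma mul_stdNormalPDF_lt_stdNormalTail {K t : ℝ} (ht : 0 < t) (hKt : K ≤ (2 - K) * t ^ 2) :
    K / (2 * t) * stdNormalPDF t < stdNormalTail t := by
  have hle : K / (2 * t) ≤ t / (t ^ 2 + 1) := by
    rw [div_le_div_iff₀ (by positivity) (by positivity)]
    nlinarith
  exact (mul_le_mul_of_nonneg_right hle (stdNormalPDF_pos t).le).trans_lt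
    (div_mul_stdNormalPDF_lt_stdNormalTail t)

lemma strictMonoOn_scaledTail {K : ℝ} (hK₀ : 0 < K) (hK₂ : K < 2) :
    StrictMonoOn (scaledTail K) (Ici (exp (1 / (2 - K)))) := by
  have ha : 1 < exp (1 / (2 - K)) := one_lt_exp_iff.2 (by bound)
  refine strictMonoOn_of_deriv_pos (convex_Ici _)
    ((continuousOn_scaledTail hK₀.ne').mono fun x hx ↦ ha.trans_le hx) fun x hx ↦ ?_
  rw [interior_Ici] at hx
  have hx₁ : 1 < x := ha.trans hx
  have hlog : 1 / (2 - K) < log x := (lt_log_iff_exp_lt (by positivity)).2 hx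
  have hKlog : 0 < K * log x := mul_pos hK₀ (log_pos hx₁)
  rw [(hasDerivAt_scaledTail hK₀.ne' hx₁).deriv, sub_pos]
  refine mul_stdNormalPDF_lt_stdNormalTail (sqrt_pos.2 hKlog) ?_
  rw [sq_sqrt hKlog.le]
  rw [div_lt_iff₀ (by linarith)] at hlog
  nlinarith

lemma scaledTail_lt_one {K x : ℝ} (hK₀ : 0 < K) (hK₂ : K < 2) (hx : 1 < x)
    (hxa : x ≤ exp (1 / (2 - K))) : scaledTail K x < 1 := by
  have hx₀ : 0 < x := by positivity
  have hlog : log x ≤ 1 / (2 - K) := (log_le_iff_le_exp hx₀).2 hxa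
  have hKlog : 0 ≤ K * log x := by have := log_pos hx; positivity
  have hexp : (1 - K / 2) * log x ≤ 1 / 2 := by
    rw [le_div_iff₀ (by linarith)] at hlog
    nlinarith
  have hhalf : exp (1 / 2) < 2 := by
    rw [← lt_log_iff_exp_lt two_pos]
    linarith [log_two_gt_d9]
  calc scaledTail K x ≤ x * (exp (-√(K * log x) ^ 2 / 2) / 2) :=
        mul_le_mul_of_nonneg_left (stdNormalTail_le (sqrt_nonneg _)) hx₀.le
    _ = exp ((1 - K / 2) * log x) / 2 := by
        rw [← mul_exp_neg_sqrt_mul_log_sq hx₀ hKlog]; ring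
    _ ≤ exp (1 / 2) / 2 := by gcongr
    _ < 1 := by linarith

lemma tendsto_scaledTail_atTop {K : ℝ} (hK₀ : 0 < K) (hK₂ : K < 2) :
    Tendsto (scaledTail K) atTop atTop := by
  set c := (√(2 * π))⁻¹ / (2 * K)
  have hlim : Tendsto (fun x ↦ c * (exp ((1 - K / 2) * log x) / log x ^ (1 : ℝ))) atTop atTop :=
    ((tendsto_exp_mul_div_rpow_atTop 1 _ (by linarith)).comp tendsto_log_atTop).const_mul_atTop
      (by positivity)
  refine tendsto_atTop_mono' _ ?_ hlim
  filter_upwards [tendsto_log_atTop.eventually_ge_atTop (1 / K), eventually_gt_atTop 1]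
    with x hlog hx
  have hx₀ : 0 < x := by positivity
  have hKlog : 1 ≤ K * log x := by rwa [div_le_iff₀' hK₀] at hlog
  set t := √(K * log x)
  have ht : t ^ 2 = K * log x := sq_sqrt (by linarith)
  have ht₁ : 1 ≤ t := by nlinarith [sqrt_nonneg (K * log x)]
  have hfrac : 1 / (2 * t ^ 2) ≤ t / (t ^ 2 + 1) := by
    rw [div_le_div_iff₀ (by positivity) (by positivity)]
    nlinarith
  calc c * (exp ((1 - K / 2) * log x) / log x ^ (1 : ℝ))
      = x * (1 / (2 * t ^ 2) * stdNormalPDF t) := by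
        rw [rpow_one, ← mul_exp_neg_sqrt_mul_log_sq hx₀ (by linarith), stdNormalPDF, ht]
        simp only [c]
        field_simp
    _ ≤ x * (t / (t ^ 2 + 1) * stdNormalPDF t) := by
        gcongr
        exact (stdNormalPDF_pos t).le
    _ ≤ scaledTail K x :=
        mul_le_mul_of_nonneg_left (div_mul_stdNormalPDF_lt_stdNormalTail t).le hx₀.le

/-- For `K ∈ (0,2)`, the equation `Φ⁻¹(1 − 1/x) = √(K log x)` has a unique solution
`x₀ > 1`, and `Φ⁻¹(1 − 1/x) − √(K log x) > 0` for every `x > x₀`.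
Here `g x` denotes `Φ⁻¹(1 − 1/x)` for `x > 1`. -/
theorem unique_crossing (K : ℝ) (hK₀ : 0 < K) (hK₂ : K < 2)
    (g : ℝ → ℝ) (hg : ∀ x : ℝ, 1 < x → stdNormalCDF (g x) = 1 - 1 / x) :
    ∃ x₀ : ℝ, 1 < x₀ ∧ g x₀ - Real.sqrt (K * Real.log x₀) = 0 ∧
      (∀ x : ℝ, 1 < x → g x - Real.sqrt (K * Real.log x) = 0 → x = x₀) ∧
      (∀ x : ℝ, x₀ < x → g x - Real.sqrt (K * Real.log x) > 0) := by
  have ha : 1 < exp (1 / (2 - K)) := one_lt_exp_iff.2 (by bound)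
  obtain ⟨x₀, hx₀, hcross, huniq, hbeyond⟩ := exists_unique_crossing_of_strictMonoOn ha
    (fun x hx ↦ scaledTail_lt_one hK₀ hK₂ hx.1 hx.2)
    ((continuousOn_scaledTail hK₀.ne').mono fun x hx ↦ ha.trans_le hx)
    (strictMonoOn_scaledTail hK₀ hK₂) (tendsto_scaledTail_atTop hK₀ hK₂)
  refine ⟨x₀, hx₀, ?_, fun x hx h ↦ huniq x hx ?_, fun x hx ↦ ?_⟩
  · exact sub_eq_zero.2 ((eq_iff_mul_stdNormalTail_eq_one (by positivity) (hg x₀ hx₀)).2 hcross)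
  · exact (eq_iff_mul_stdNormalTail_eq_one (by positivity) (hg x hx)).1 (sub_eq_zero.1 h)
  · have hx₁ : 1 < x := hx₀.trans hx
    exact sub_pos.2 ((lt_iff_one_lt_mul_stdNormalTail (by positivity) (hg x hx₁)).2
      (hbeyond x hx))
end

section
/- As n → ∞, b_n − β̄_n = O((log log n)²/(log n)^{5/2}), where β̄_n = (log(n²/(2π)) − log log(n²/(2π)) + (log log(n²/(2π)) − 2)/log(n²/(2π)))^{1/2}. -/
open Real Filter Asymptotics

open MeasureTheory Set Topology

/-! Integrating exact derivatives gives the Mills-ratio bounds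
`(1/x - 1/x³) e^{-x²/2} ≤ ∫ₓ^∞ e^{-t²/2} dt ≤ (1/x - 1/x³ + 3/x⁵) e^{-x²/2}`, which say that
`x = b_n` solves `g(x²) = ℓ + O(x⁻⁴)`, where `g(B) = B + log B + 2/B` and `ℓ = log(n²/2π)`.
The map `g` expands distances on `[2, ∞)`, and `β̄_n² = ℓ - log ℓ + (log ℓ - 2)/ℓ` solves the
same equation up to `O((log ℓ)²/ℓ²)`, so `b_n² - β̄_n² = O((log ℓ)²/ℓ²)`. Dividing by
`b_n + β̄_n ≥ √ℓ / 2` gives the error `O((log ℓ)²/ℓ^{5/2})`, and `log n ≤ ℓ ≤ (log n)²`. -/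

noncomputable def gaussTail (x : ℝ) : ℝ := ∫ t in Ioi x, exp (-t ^ 2 / 2)

lemma integrable_exp_neg_sq_div_two : Integrable fun t : ℝ => exp (-t ^ 2 / 2) := by
  simpa [neg_div, div_eq_inv_mul] using integrable_exp_neg_mul_sq (inv_pos.2 (two_pos (α := ℝ)))

lemma integral_exp_neg_sq_div_two : ∫ t : ℝ, exp (-t ^ 2 / 2) = √(2 * π) := by
  simpa [neg_div, div_eq_inv_mul] using integral_gaussian (2⁻¹ : ℝ)

lemma stdNormalCDF_eq_one_sub_gaussTail (x : ℝ) :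
    stdNormalCDF x = 1 - (√(2 * π))⁻¹ * gaussTail x := by
  have hsplit := intervalIntegral.integral_Iic_add_Ioi (b := x)
    integrable_exp_neg_sq_div_two.integrableOn integrable_exp_neg_sq_div_two.integrableOn
  rw [integral_exp_neg_sq_div_two, ← eq_sub_iff_add_eq] at hsplit
  rw [stdNormalCDF, gaussTail, hsplit]
  field_simp

lemma gaussTail_eq_of_stdNormalCDF_eq {x y : ℝ} (h : stdNormalCDF x = 1 - 1 / y) :
    gaussTail x = √(2 * π) / y := by
  rw [stdNormalCDF_eq_one_sub_gaussTail, sub_right_inj] at h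
  have hs : √(2 * π) ≠ 0 := by positivity
  field_simp at h ⊢
  linarith

lemma gaussTail_antitone : Antitone gaussTail := fun _ _ hxy =>
  setIntegral_mono_set integrable_exp_neg_sq_div_two.integrableOn
    (.of_forall fun _ => (exp_pos _).le) (Ioi_subset_Ioi hxy).eventuallyLE

lemma hasDerivAt_neg_mul_exp_neg_sq_div_two {q : ℝ → ℝ} {q' t : ℝ} (hq : HasDerivAt q q' t) :
    HasDerivAt (fun s => -(q s * exp (-s ^ 2 / 2))) ((t * q t - q') * exp (-t ^ 2 / 2)) t := by
  have hexponent : HasDerivAt (fun s : ℝ => -s ^ 2 / 2) (-t) t :=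
    ((hasDerivAt_pow 2 t).neg.div_const 2).congr_deriv (by ring)
  exact (hq.mul hexponent.exp).neg.congr_deriv (by ring)

lemma integrableOn_one_add_div_pow_mul_exp {x : ℝ} (hx : 0 < x) (c : ℝ) (k : ℕ) :
    IntegrableOn (fun t => (1 + c / t ^ k) * exp (-t ^ 2 / 2)) (Ioi x) := by
  refine integrable_exp_neg_sq_div_two.integrableOn.bdd_mul (c := 1 + |c| / x ^ k) ?_ ?_
  · refine ContinuousOn.aestronglyMeasurable ?_ measurableSet_Ioi
    exact continuousOn_const.add <| continuousOn_const.div (continuousOn_pow k)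
      fun t ht => pow_ne_zero k (hx.trans ht).ne'
  · refine (ae_restrict_iff' measurableSet_Ioi).2 (.of_forall fun t hxt => ?_)
    have ht : 0 < t := hx.trans hxt
    calc ‖1 + c / t ^ k‖ ≤ ‖(1 : ℝ)‖ + ‖c / t ^ k‖ := norm_add_le _ _
      _ = 1 + |c| / t ^ k := by simp [abs_of_pos ht]
      _ ≤ 1 + |c| / x ^ k := by gcongr; exact hxt.le

lemma integral_Ioi_mul_exp_neg_sq_div_two {q q' : ℝ → ℝ} {x c : ℝ} {k : ℕ} (hx : 0 < x)
    (hq : ∀ t, 0 < t → HasDerivAt q (q' t) t) (hq_lim : Tendsto q atTop (𝓝 0))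
    (hweight : ∀ t, 0 < t → t * q t - q' t = 1 + c / t ^ k) :
    ∫ t in Ioi x, (1 + c / t ^ k) * exp (-t ^ 2 / 2) = q x * exp (-x ^ 2 / 2) := by
  have hexp : Tendsto (fun s : ℝ => exp (-s ^ 2 / 2)) atTop (𝓝 0) := by
    have hsq : Tendsto (fun s : ℝ => s ^ 2 / 2) atTop atTop :=
      (tendsto_pow_atTop two_ne_zero).atTop_div_const two_pos
    simpa [neg_div] using hsq
  have hlim : Tendsto (fun s => -(q s * exp (-s ^ 2 / 2))) atTop (𝓝 0) := by
    simpa using (hq_lim.mul hexp).neg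
  rw [integral_Ioi_of_hasDerivAt_of_tendsto' (fun t ht => ?_)
    (integrableOn_one_add_div_pow_mul_exp hx c k) hlim]
  · ring
  · have ht : 0 < t := hx.trans_le ht
    rw [← hweight t ht]
    exact hasDerivAt_neg_mul_exp_neg_sq_div_two (hq t ht)

lemma hasDerivAt_const_div_pow (c : ℝ) (k : ℕ) {t : ℝ} (ht : t ≠ 0) :
    HasDerivAt (fun s => c / s ^ k) (-(c * k) / t ^ (k + 1)) t := by
  have h := ((hasDerivAt_pow k t).inv (pow_ne_zero k ht)).const_mul c
  refine (h.congr_deriv ?_).congr_of_eventuallyEq (.of_forall fun s => div_eq_mul_inv _ _)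
  rcases k with _ | k
  · simp
  · rw [Nat.add_sub_cancel]
    field_simp
    ring

lemma le_gaussTail {x : ℝ} (hx : 0 < x) :
    (1 / x - 1 / x ^ 3) * exp (-x ^ 2 / 2) ≤ gaussTail x := by
  have hq (t : ℝ) (ht : 0 < t) : HasDerivAt (fun s => 1 / s - 1 / s ^ 3)
      (-1 / t ^ 2 + 3 / t ^ 4) t := by
    refine ((hasDerivAt_const_div_pow 1 1 ht.ne').sub
      (hasDerivAt_const_div_pow 1 3 ht.ne')).congr_of_eventuallyEq
      (.of_forall fun s => by simp) |>.congr_deriv ?_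
    ring
  have hq_lim : Tendsto (fun s : ℝ => 1 / s - 1 / s ^ 3) atTop (𝓝 0) := by
    simpa using tendsto_id.const_div_atTop 1 |>.sub
      ((tendsto_pow_atTop three_ne_zero).const_div_atTop (1 : ℝ))
  rw [← integral_Ioi_mul_exp_neg_sq_div_two (c := -3) (k := 4) hx hq hq_lim ?_]
  · refine setIntegral_mono_on (integrableOn_one_add_div_pow_mul_exp hx _ _)
      integrable_exp_neg_sq_div_two.integrableOn measurableSet_Ioi fun t ht => ?_
    have : 0 < t := hx.trans ht
    have : (-3) / t ^ 4 ≤ 0 := div_nonpos_of_nonpos_of_nonneg (by norm_num) (by positivity)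
    nlinarith [exp_pos (-t ^ 2 / 2)]
  · intro t ht
    field_simp
    ring

lemma gaussTail_le {x : ℝ} (hx : 0 < x) :
    gaussTail x ≤ (1 / x - 1 / x ^ 3 + 3 / x ^ 5) * exp (-x ^ 2 / 2) := by
  have hq (t : ℝ) (ht : 0 < t) : HasDerivAt (fun s => 1 / s - 1 / s ^ 3 + 3 / s ^ 5)
      (-1 / t ^ 2 + 3 / t ^ 4 - 15 / t ^ 6) t := by
    refine ((hasDerivAt_const_div_pow 1 1 ht.ne').sub
      (hasDerivAt_const_div_pow 1 3 ht.ne')).add (hasDerivAt_const_div_pow 3 5 ht.ne')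
      |>.congr_of_eventuallyEq (.of_forall fun s => by simp) |>.congr_deriv ?_
    ring
  have hq_lim : Tendsto (fun s : ℝ => 1 / s - 1 / s ^ 3 + 3 / s ^ 5) atTop (𝓝 0) := by
    simpa using (tendsto_id.const_div_atTop 1 |>.sub
      ((tendsto_pow_atTop three_ne_zero).const_div_atTop (1 : ℝ))).add
      ((tendsto_pow_atTop (by norm_num : 5 ≠ 0)).const_div_atTop (3 : ℝ))
  rw [← integral_Ioi_mul_exp_neg_sq_div_two (c := 15) (k := 6) hx hq hq_lim ?_]
  · refine setIntegral_mono_on integrable_exp_neg_sq_div_two.integrableOn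
      (integrableOn_one_add_div_pow_mul_exp hx _ _) measurableSet_Ioi fun t ht => ?_
    have : 0 < t := hx.trans ht
    have : 0 ≤ 15 / t ^ 6 := by positivity
    nlinarith [exp_pos (-t ^ 2 / 2)]
  · intro t ht
    field_simp
    ring

lemma gaussTail_pos (x : ℝ) : 0 < gaussTail x := by
  set y := max x 2
  have hy : 2 ≤ y := le_max_right x 2
  have hcoef : 0 < 1 / y - 1 / y ^ 3 := by
    rw [sub_pos]
    exact one_div_lt_one_div_of_lt (by linarith) (lt_self_pow₀ (by linarith) (by norm_num))
  exact (mul_pos hcoef (exp_pos _)).trans_le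
    ((le_gaussTail (by linarith)).trans (gaussTail_antitone (le_max_left x 2)))

lemma tendsto_atTop_of_tendsto_gaussTail {α : Type*} {l : Filter α} {f : α → ℝ}
    (h : Tendsto (fun i => gaussTail (f i)) l (𝓝 0)) : Tendsto f l atTop :=
  tendsto_atTop.2 fun c => (h.eventually_lt_const (gaussTail_pos c)).mono
    fun _ hi => (gaussTail_antitone.reflect_lt hi).le

lemma abs_log_one_sub_add_le {u : ℝ} (hu : |u| ≤ 1 / 2) : |log (1 - u) + u| ≤ 2 * u ^ 2 := by
  have h := abs_log_sub_add_sum_range_le (hu.trans_lt (by norm_num)) 1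
  simp only [Finset.sum_range_one, zero_add, pow_one, Nat.cast_zero, div_one] at h
  rw [add_comm]
  refine h.trans ?_
  rw [div_le_iff₀ (by linarith), sq_abs]
  nlinarith [sq_nonneg u]

noncomputable def tailExponent (B : ℝ) : ℝ := B + log B + 2 / B

lemma abs_tailExponent_sq_add_two_mul_log_gaussTail_le {x : ℝ} (hx : 2 ≤ x) :
    |tailExponent (x ^ 2) + 2 * log (gaussTail x)| ≤ 6 / x ^ 4 := by
  have hx0 : 0 < x := by linarith
  set u := 1 / x ^ 2 with hu
  have hu0 : 0 < u := by positivity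
  have hu4 : u ≤ 1 / 4 := by rw [hu, div_le_div_iff₀ (by positivity) (by norm_num)]; nlinarith
  have hlog (a : ℝ) (ha : 0 < a) : log (a / x * exp (-x ^ 2 / 2)) = log a - log x - x ^ 2 / 2 := by
    rw [log_mul (by positivity) (exp_pos _).ne', log_div ha.ne' hx0.ne', log_exp]
    ring
  have h1u : 0 < 1 - u := by linarith
  have hge : (1 - u) / x * exp (-x ^ 2 / 2) ≤ gaussTail x := by
    convert le_gaussTail hx0 using 2
    rw [hu]; field_simp
  have hle : gaussTail x ≤ (1 - u + 3 * u ^ 2) / x * exp (-x ^ 2 / 2) := by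
    convert gaussTail_le hx0 using 2
    rw [hu]; field_simp
  have hlower := hlog _ h1u ▸ log_le_log (by positivity) hge
  have hupper := hlog (1 - u + 3 * u ^ 2) (by positivity) ▸
    log_le_log ((by positivity : (0 : ℝ) < _).trans_le hge) hle
  have hlog_lower := abs_le.1 (abs_log_one_sub_add_le (u := u) (by rw [abs_of_pos hu0]; linarith))
  have hlog_upper := log_le_sub_one_of_pos (x := 1 - u + 3 * u ^ 2) (by nlinarith)
  have hexp : tailExponent (x ^ 2) = x ^ 2 + 2 * log x + 2 * u := by
    rw [tailExponent, log_pow, hu]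
    push_cast
    ring
  rw [hexp, show 6 / x ^ 4 = 6 * u ^ 2 by rw [hu]; field_simp, abs_le]
  constructor <;> nlinarith

lemma abs_tailExponent_sq_sub_log_le_of_stdNormalCDF_eq {x y : ℝ} (hx : 2 ≤ x) (hy : 0 < y)
    (h : stdNormalCDF x = 1 - 1 / y) :
    |tailExponent (x ^ 2) - log (y ^ 2 / (2 * π))| ≤ 6 / x ^ 4 := by
  have hlog : 2 * log (gaussTail x) = -log (y ^ 2 / (2 * π)) := by
    rw [gaussTail_eq_of_stdNormalCDF_eq h, log_div (by positivity) hy.ne', log_sqrt (by positivity),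
      log_div (by positivity) (by positivity), log_pow]
    push_cast
    ring
  simpa [hlog, sub_eq_add_neg] using abs_tailExponent_sq_add_two_mul_log_gaussTail_le hx

lemma sub_le_tailExponent_sub {x y : ℝ} (hx : 2 ≤ x) (hxy : x ≤ y) :
    y - x ≤ tailExponent y - tailExponent x := by
  have hx0 : 0 < x := by linarith
  have hy0 : 0 < y := by linarith
  have hlog : 1 - x / y ≤ log y - log x := by
    have := log_le_sub_one_of_pos (div_pos hx0 hy0)
    rw [log_div hx0.ne' hy0.ne'] at this
    linarith
  have hinv : 2 / x - 2 / y ≤ 1 - x / y := by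
    rw [div_sub_div _ _ hx0.ne' hy0.ne', one_sub_div hy0.ne', div_le_div_iff₀ (by positivity) hy0]
    nlinarith [mul_nonneg (mul_nonneg (sub_nonneg.2 hxy) hy0.le) (sub_nonneg.2 hx)]
  rw [tailExponent, tailExponent]
  linarith

lemma abs_sub_le_abs_tailExponent_sub {x y : ℝ} (hx : 2 ≤ x) (hy : 2 ≤ y) :
    |x - y| ≤ |tailExponent x - tailExponent y| := by
  rcases le_total x y with hxy | hxy
  · rw [abs_sub_comm, abs_sub_comm (tailExponent x), abs_of_nonneg (sub_nonneg.2 hxy)]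
    exact (sub_le_tailExponent_sub hx hxy).trans (le_abs_self _)
  · rw [abs_of_nonneg (sub_nonneg.2 hxy)]
    exact (sub_le_tailExponent_sub hy hxy).trans (le_abs_self _)

noncomputable def approxRoot (ℓ : ℝ) : ℝ := ℓ - log ℓ + (log ℓ - 2) / ℓ

lemma sub_log_le_approxRoot {ℓ : ℝ} (hℓ : 0 ≤ ℓ) (hL : 2 ≤ log ℓ) : ℓ - log ℓ ≤ approxRoot ℓ := by
  have : 0 ≤ (log ℓ - 2) / ℓ := div_nonneg (by linarith) hℓ
  rw [approxRoot]; linarith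

lemma approxRoot_le {ℓ : ℝ} (hℓ : 1 ≤ ℓ) (hL : 2 ≤ log ℓ) : approxRoot ℓ ≤ ℓ := by
  have : (log ℓ - 2) / ℓ ≤ log ℓ - 2 := div_le_self (by linarith) hℓ
  rw [approxRoot]; linarith

lemma abs_tailExponent_approxRoot_sub_le {ℓ : ℝ} (hL : 2 ≤ log ℓ) (hLℓ : log ℓ ≤ ℓ / 8) :
    |tailExponent (approxRoot ℓ) - ℓ| ≤ 5 * log ℓ ^ 2 / ℓ ^ 2 := by
  set L := log ℓ
  set T := approxRoot ℓ
  have hℓ : 0 < ℓ := by linarith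
  have hT : ℓ / 2 ≤ T := by linarith [sub_log_le_approxRoot (by linarith) hL]
  have hT0 : 0 < T := by linarith
  set u := L / ℓ - (L - 2) / ℓ ^ 2 with hu
  have hu0 : 0 ≤ u := by
    rw [hu, sub_nonneg, div_le_div_iff₀ (by positivity) hℓ]; nlinarith
  have huL : u ≤ L / ℓ := by
    have : 0 ≤ (L - 2) / ℓ ^ 2 := div_nonneg (by linarith) (by positivity)
    linarith
  have hLℓ' : L / ℓ ≤ 1 / 8 := by rw [div_le_iff₀ hℓ]; linarith
  have hTu : T = ℓ * (1 - u) := by simp only [T, approxRoot, hu]; field_simp; ring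
  have hsplit : tailExponent T - ℓ = (log (1 - u) + u) + (2 / T - 2 / ℓ) + (L - 2) / ℓ ^ 2 := by
    rw [tailExponent, hTu, log_mul hℓ.ne' (by linarith), hu]
    field_simp
    ring
  have hlog : |log (1 - u) + u| ≤ 2 * (L / ℓ) ^ 2 := by
    refine (abs_log_one_sub_add_le (by rw [abs_of_nonneg hu0]; linarith)).trans ?_
    gcongr
  have hinv : |2 / T - 2 / ℓ| ≤ 4 * L / ℓ ^ 2 := by
    rw [div_sub_div _ _ (by linarith) hℓ.ne', abs_div, abs_of_pos (by positivity : 0 < T * ℓ),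
      div_le_div_iff₀ (by positivity) (by positivity)]
    have hTℓ : T ≤ ℓ := approxRoot_le (by linarith) hL
    have hℓT : ℓ - T ≤ L := by linarith [sub_log_le_approxRoot (by linarith) hL]
    rw [abs_of_nonneg (by nlinarith)]
    nlinarith [mul_le_mul_of_nonneg_left hT (by positivity : 0 ≤ L * ℓ)]
  have hrest : |(L - 2) / ℓ ^ 2| ≤ L / ℓ ^ 2 := by
    rw [abs_of_nonneg (div_nonneg (by linarith) (by positivity))]
    gcongr; linarith
  calc |tailExponent T - ℓ| ≤ 2 * (L / ℓ) ^ 2 + 4 * L / ℓ ^ 2 + L / ℓ ^ 2 := by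
        rw [hsplit]
        exact (abs_add_three _ _ _).trans (by gcongr)
    _ = (2 * L ^ 2 + 5 * L) / ℓ ^ 2 := by ring
    _ ≤ 5 * L ^ 2 / ℓ ^ 2 := by gcongr; nlinarith

lemma abs_sub_sqrt_le {β T : ℝ} (hβ : 0 ≤ β) (hT : 0 < T) : |β - √T| ≤ |β ^ 2 - T| / √T := by
  have hsT : 0 < √T := sqrt_pos.2 hT
  have hfactor : β ^ 2 - T = (β - √T) * (β + √T) := by
    linear_combination mul_self_sqrt hT.le
  rw [le_div_iff₀ hsT]
  calc |β - √T| * √T ≤ |β - √T| * (β + √T) := by gcongr; linarith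
    _ = |β ^ 2 - T| := by rw [hfactor, abs_mul, abs_of_pos (by positivity : 0 < β + √T)]

lemma half_le_of_abs_tailExponent_sub_le {ℓ B : ℝ} (hLℓ : log ℓ ≤ ℓ / 8) (hB : 4 ≤ B)
    (h : |tailExponent B - ℓ| ≤ 6 / B ^ 2) : ℓ / 2 ≤ B := by
  have hlogB : 1 ≤ log B := by
    have : (1 : ℝ) < log 4 := by
      rw [show (4 : ℝ) = 2 ^ 2 by norm_num, log_pow]; push_cast; linarith [log_two_gt_d9]
    linarith [log_le_log (by norm_num) hB]
  have h6 : 6 / B ^ 2 ≤ 1 / 2 := by rw [div_le_div_iff₀ (by positivity) (by norm_num)]; nlinarith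
  have h2 : 2 / B ≤ 1 / 2 := by rw [div_le_div_iff₀ (by positivity) (by norm_num)]; linarith
  have h2' : 0 < 2 / B := by positivity
  obtain ⟨hlo, hhi⟩ := abs_le.1 h
  rw [tailExponent] at hlo hhi
  have hBℓ : log B ≤ log ℓ := log_le_log (by positivity) (by linarith)
  have hℓ : 0 < ℓ := by linarith
  linarith

lemma abs_sub_sqrt_approxRoot_le {ℓ β : ℝ} (hL : 2 ≤ log ℓ) (hLℓ : log ℓ ≤ ℓ / 8) (hβ : 2 ≤ β)
    (h : |tailExponent (β ^ 2) - ℓ| ≤ 6 / β ^ 4) :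
    |β - √(approxRoot ℓ)| ≤ 22 * log ℓ ^ 2 / ℓ ^ (5 / 2 : ℝ) := by
  set L := log ℓ
  set T := approxRoot ℓ
  have hℓ : 16 ≤ ℓ := by linarith
  have hT : ℓ / 2 ≤ T := by linarith [sub_log_le_approxRoot (by linarith) hL]
  have hB4 : 4 ≤ β ^ 2 := by nlinarith
  rw [show β ^ 4 = (β ^ 2) ^ 2 by ring] at h
  have hB := half_le_of_abs_tailExponent_sub_le hLℓ hB4 h
  have hB6 : 6 / (β ^ 2) ^ 2 ≤ 6 * L ^ 2 / ℓ ^ 2 := by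
    rw [div_le_div_iff₀ (by positivity) (by positivity)]
    have hB2 : ℓ ^ 2 / 4 ≤ (β ^ 2) ^ 2 := by nlinarith
    have hL2 : 4 ≤ L ^ 2 := by nlinarith
    nlinarith [mul_le_mul hL2 hB2 (by positivity) (by positivity)]
  have hBT : |β ^ 2 - T| ≤ 11 * L ^ 2 / ℓ ^ 2 := calc
    |β ^ 2 - T| ≤ |tailExponent (β ^ 2) - tailExponent T| :=
      abs_sub_le_abs_tailExponent_sub (by linarith) (by linarith)
    _ ≤ |tailExponent (β ^ 2) - ℓ| + |tailExponent T - ℓ| := by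
      rw [abs_sub_comm (tailExponent T)]; exact abs_sub_le _ ℓ _
    _ ≤ 6 * L ^ 2 / ℓ ^ 2 + 5 * L ^ 2 / ℓ ^ 2 :=
      add_le_add (h.trans hB6) (abs_tailExponent_approxRoot_sub_le hL hLℓ)
    _ = 11 * L ^ 2 / ℓ ^ 2 := by ring
  have hsqrt : √ℓ / 2 ≤ √T := by
    rw [le_sqrt (by positivity) (by linarith), div_pow, sq_sqrt (by linarith)]
    linarith
  have hrpow : ℓ ^ (5 / 2 : ℝ) = ℓ ^ 2 * √ℓ := by
    rw [sqrt_eq_rpow, ← rpow_natCast, ← rpow_add (by linarith)]; norm_num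
  calc |β - √T| ≤ |β ^ 2 - T| / √T := abs_sub_sqrt_le (by linarith) (by linarith)
    _ ≤ 11 * L ^ 2 / ℓ ^ 2 / (√ℓ / 2) := by gcongr
    _ = 22 * L ^ 2 / ℓ ^ (5 / 2 : ℝ) := by rw [hrpow]; field_simp; ring

lemma isBigO_log_sq_div_rpow_of_le {α : Type*} {l : Filter α} {ℓ m : α → ℝ} {p : ℝ} (hp : 0 ≤ p)
    (h : ∀ᶠ i in l, 1 ≤ m i ∧ m i ≤ ℓ i ∧ ℓ i ≤ m i ^ 2) :
    (fun i => log (ℓ i) ^ 2 / ℓ i ^ p) =O[l] fun i => log (m i) ^ 2 / m i ^ p := by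
  refine .of_bound 4 (h.mono fun i ⟨hm, hmℓ, hℓm⟩ => ?_)
  have hlogℓ : 0 ≤ log (ℓ i) := log_nonneg (hm.trans hmℓ)
  have hlog : log (ℓ i) ≤ 2 * log (m i) := by
    simpa [log_pow] using log_le_log (by linarith) hℓm
  have hm0 : 0 < m i ^ p := rpow_pos_of_pos (by linarith) p
  have hpow : m i ^ p ≤ ℓ i ^ p := rpow_le_rpow (by linarith) hmℓ hp
  rw [norm_of_nonneg (div_nonneg (sq_nonneg _) (hm0.le.trans hpow)),
    norm_of_nonneg (div_nonneg (sq_nonneg _) hm0.le), ← mul_div_assoc]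
  exact div_le_div₀ (by positivity) (by nlinarith) hm0 hpow

lemma eventually_two_le_log_and_log_le_div_eight :
    ∀ᶠ x : ℝ in atTop, 2 ≤ log x ∧ log x ≤ x / 8 := by
  filter_upwards [tendsto_log_atTop.eventually_ge_atTop 2,
    isLittleO_log_id_atTop.bound (by norm_num : (0 : ℝ) < 1 / 8),
    eventually_ge_atTop 0] with x hx2 hx hx0
  rw [id, norm_of_nonneg hx0] at hx
  exact ⟨hx2, by linarith [le_norm_self (log x)]⟩

lemma tendsto_log_sq_div_two_pi : Tendsto (fun x : ℝ => log (x ^ 2 / (2 * π))) atTop atTop :=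
  tendsto_log_atTop.comp <| (tendsto_pow_atTop two_ne_zero).atTop_div_const (by positivity)

lemma eventually_log_le_log_sq_div_two_pi_le_log_sq :
    ∀ᶠ x : ℝ in atTop, 1 ≤ log x ∧ log x ≤ log (x ^ 2 / (2 * π)) ∧
      log (x ^ 2 / (2 * π)) ≤ log x ^ 2 := by
  filter_upwards [tendsto_log_atTop.eventually_ge_atTop 2,
    tendsto_log_atTop.eventually_ge_atTop (log (2 * π)), eventually_gt_atTop 0] with x h2 h2π hx
  have hlog2π : 0 ≤ log (2 * π) := log_nonneg (by linarith [pi_gt_three])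
  rw [log_div (by positivity) (by positivity), log_pow]
  push_cast
  exact ⟨by linarith, by linarith, by nlinarith⟩

/-- `bₙ − β̄ₙ = O((log log n)²/(log n)^{5/2})` as `n → ∞`, where
`β̄ₙ = (log(n²/(2π)) − log log(n²/(2π)) + (log log(n²/(2π)) − 2)/log(n²/(2π)))^{1/2}`. -/
theorem bn_asymptotic (b : ℕ → ℝ)
    (hb : ∀ n : ℕ, 2 ≤ n → stdNormalCDF (b n) = 1 - 1 / (n : ℝ)) :
    (fun n : ℕ =>
        b n - Real.sqrt (Real.log ((n : ℝ) ^ 2 / (2 * Real.pi))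
          - Real.log (Real.log ((n : ℝ) ^ 2 / (2 * Real.pi)))
          + (Real.log (Real.log ((n : ℝ) ^ 2 / (2 * Real.pi))) - 2)
              / Real.log ((n : ℝ) ^ 2 / (2 * Real.pi))))
      =O[atTop]
    (fun n : ℕ => (Real.log (Real.log n)) ^ 2 / (Real.log n) ^ ((5 : ℝ) / 2)) := by
  have hb_top : Tendsto b atTop atTop := tendsto_atTop_of_tendsto_gaussTail <|
    (tendsto_const_div_atTop_nhds_zero_nat √(2 * π)).congr' <| (eventually_ge_atTop 2).mono
      fun n hn => (gaussTail_eq_of_stdNormalCDF_eq (hb n hn)).symm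
  have hℓ : Tendsto (fun n : ℕ => log ((n : ℝ) ^ 2 / (2 * π))) atTop atTop :=
    tendsto_log_sq_div_two_pi.comp tendsto_natCast_atTop_atTop
  have herr : (fun n : ℕ => b n - √(approxRoot (log ((n : ℝ) ^ 2 / (2 * π))))) =O[atTop]
      fun n => log (log ((n : ℝ) ^ 2 / (2 * π))) ^ 2 /
        log ((n : ℝ) ^ 2 / (2 * π)) ^ (5 / 2 : ℝ) := by
    refine .of_bound 22 ?_
    filter_upwards [hℓ.eventually eventually_two_le_log_and_log_le_div_eight,
      hb_top.eventually_ge_atTop 2, eventually_ge_atTop 2] with n ⟨hL, hLℓ⟩ hbn hn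
    rw [norm_eq_abs, norm_of_nonneg (div_nonneg (sq_nonneg _) (rpow_nonneg (by linarith) _)),
      ← mul_div_assoc]
    exact abs_sub_sqrt_approxRoot_le hL hLℓ hbn <|
      abs_tailExponent_sq_sub_log_le_of_stdNormalCDF_eq hbn (by positivity) (hb n hn)
  exact herr.trans <| isBigO_log_sq_div_rpow_of_le (by norm_num) <|
    tendsto_natCast_atTop_atTop.eventually eventually_log_le_log_sq_div_two_pi_le_log_sq
end
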